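/- Best reply of player x at the catching threshold (case b of Theorem 2, middle branch of B_x): assume pλ > 0, 0 < d0 := d_x(x0, y0) < d < d_y(x0, y0), where d = T·(v_max − v_min) and v_min < v_max, and let v_y := v_max − d0/T (which belongs to Γ). Then for every w ∈ Γ, u_x(x0, w, y0, v_y) ≤ u_x(x0, v_max, y0, v_y), and u_x(x0, v_max, y0, v_y) = pλ·D/2 − c·T; i.e., v_max is a best reply of player x to v_y, achieved by exactly catching up with player y. -/

import Mathlib

/-- The reduction of a real number `r` modulo the circuit length `D`: the relative
position on the torus, `(r) mod D = r − D·⌊r/D⌋ ∈ [0, D)`. -/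
noncomputable def modD (D r : ℝ) : ℝ := r - D * (⌊r / D⌋ : ℝ)

/-- The directed (clockwise) distance from `x` to `y` on the circuit of length `D`. -/
noncomputable def dirX (D x y : ℝ) : ℝ := if x ≤ y then y - x else D + y - x

/-- The directed (clockwise) distance from `y` to `x` on the circuit of length `D`. -/
noncomputable def dirY (D x y : ℝ) : ℝ := dirX D y x

/-- Utility of player x: starting from `x0` and `y0`, driving at speeds `vx`, `vy`
for time `T`, with fare `p`, passenger rate `lam` and cost rate `c`. -/
noncomputable def uX (D p lam c T x0 y0 vx vy : ℝ) : ℝ :=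
  if modD D (x0 + T * vx) ≠ modD D (y0 + T * vy) then
    p * lam * dirX D (modD D (x0 + T * vx)) (modD D (y0 + T * vy)) - c * T
  else p * lam * (D / 2) - c * T

/-- Utility of player y, defined like `uX` with the directed distance `dirY`. -/
noncomputable def uY (D p lam c T x0 y0 vx vy : ℝ) : ℝ :=
  if modD D (x0 + T * vx) ≠ modD D (y0 + T * vy) then
    p * lam * dirY D (modD D (x0 + T * vx)) (modD D (y0 + T * vy)) - c * T
  else p * lam * (D / 2) - c * T

/-!
Against `v_y = v_max − d₀/T`, player y ends at `y₀ + T·v_max − d₀ ≡ x₀ + T·v_max (mod D)`, since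
`d₀ = d_x(x₀, y₀) ≡ y₀ − x₀`; so driving at `v_max` lands player x exactly on player y, which pays
`pλ·D/2 − c·T`. Any slower speed `w` leaves player x at directed distance `T·(v_max − w) < D/2`
behind player y, which pays less.
-/

open AddCommGroup Set

section Circuit

variable {D : ℝ}

theorem modD_eq_toIcoMod (hD : 0 < D) (r : ℝ) : modD D r = toIcoMod hD 0 r := by
  rw [toIcoMod_eq_fract_mul, Int.fract, modD]
  field_simp

theorem modD_mem_Ico (hD : 0 < D) (r : ℝ) : modD D r ∈ Ico 0 D := by
  rw [modD_eq_toIcoMod hD]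
  exact toIcoMod_mem_Ico' hD r

theorem modD_modEq (hD : 0 < D) (r : ℝ) : modD D r ≡ r [PMOD D] := by
  rw [modD_eq_toIcoMod hD, ← toIcoMod_inj hD (c := 0), toIcoMod_toIcoMod]

theorem modD_eq_modD_iff (hD : 0 < D) {a b : ℝ} : modD D a = modD D b ↔ a ≡ b [PMOD D] := by
  rw [modD_eq_toIcoMod hD, modD_eq_toIcoMod hD, toIcoMod_inj]

theorem modD_eq_self (hD : 0 < D) {r : ℝ} (hr : r ∈ Ico 0 D) : modD D r = r := by
  rw [modD_eq_toIcoMod hD, toIcoMod_eq_self, zero_add]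
  exact hr

theorem dirX_modEq_sub (x y : ℝ) : dirX D x y ≡ y - x [PMOD D] := by
  unfold dirX
  split_ifs
  · exact modEq_rfl
  · rw [add_sub_assoc]
    exact add_modEq_right.mpr self_modEq_zero

theorem dirX_mem_Ico {x y : ℝ} (hx : x ∈ Ico 0 D) (hy : y ∈ Ico 0 D) : dirX D x y ∈ Ico 0 D := by
  obtain ⟨hx₀, hxD⟩ := hx
  obtain ⟨hy₀, hyD⟩ := hy
  unfold dirX
  split_ifs <;> constructor <;> linarith

theorem dirX_modD_modD (hD : 0 < D) (a b : ℝ) :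
    dirX D (modD D a) (modD D b) = modD D (b - a) := by
  rw [← modD_eq_self hD (dirX_mem_Ico (modD_mem_Ico hD a) (modD_mem_Ico hD b)),
    modD_eq_modD_iff hD]
  exact (dirX_modEq_sub _ _).trans ((modD_modEq hD b).sub (modD_modEq hD a))

end Circuit

section Utility

variable {D p lam c T x0 y0 vx vy : ℝ}

theorem uX_of_modD_eq (h : modD D (x0 + T * vx) = modD D (y0 + T * vy)) :
    uX D p lam c T x0 y0 vx vy = p * lam * (D / 2) - c * T := by
  simp [uX, h]

theorem uX_le_of_dirX_le (hplam : 0 ≤ p * lam)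
    (h : dirX D (modD D (x0 + T * vx)) (modD D (y0 + T * vy)) ≤ D / 2) :
    uX D p lam c T x0 y0 vx vy ≤ p * lam * (D / 2) - c * T := by
  unfold uX
  split_ifs
  · gcongr
  · rfl

end Utility

theorem best_reply_x_middle_branch_general
    (D p lam c T vmin vmax x0 y0 d0 d : ℝ)
    (hD : 0 < D) (hvmin : 0 < vmin) (hT : 0 < T)
    (hshort : T * vmax < D / 2)
    (hplam : 0 < p * lam)
    (hd0 : d0 = dirX D x0 y0) (hd : d = T * (vmax - vmin))
    (hd0pos : 0 < d0) (hd0d : d0 < d) :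
    vmax - d0 / T ∈ Set.Icc vmin vmax ∧
    (∀ w ∈ Set.Icc vmin vmax,
      uX D p lam c T x0 y0 w (vmax - d0 / T) ≤
        uX D p lam c T x0 y0 vmax (vmax - d0 / T)) ∧
    uX D p lam c T x0 y0 vmax (vmax - d0 / T) = p * lam * (D / 2) - c * T := by
  have hcatch : modD D (x0 + T * vmax) = modD D (y0 + T * (vmax - d0 / T)) := by
    rw [modD_eq_modD_iff hD, mul_sub, mul_div_cancel₀ _ hT.ne', hd0]
    calc x0 + T * vmax = y0 + (T * vmax - (y0 - x0)) := by ring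
      _ ≡ y0 + (T * vmax - dirX D x0 y0) [PMOD D] :=
        ((dirX_modEq_sub x0 y0).symm.sub_left _).add_left _
  have hd0T : d0 / T < vmax - vmin := by rw [div_lt_iff₀ hT]; linarith
  refine ⟨⟨by linarith, by linarith [div_pos hd0pos hT]⟩, fun w ⟨hw, hw'⟩ => ?_,
    uX_of_modD_eq hcatch⟩
  rw [uX_of_modD_eq hcatch]
  apply uX_le_of_dirX_le hplam.le
  have hTw : 0 ≤ T * w := mul_nonneg hT.le (by linarith)
  have hTw' : T * w ≤ T * vmax := mul_le_mul_of_nonneg_left hw' hT.le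
  rw [← hcatch, dirX_modD_modD hD, add_sub_add_left_eq_sub,
    modD_eq_self hD ⟨by linarith, by linarith⟩]
  linarith

/-- Best reply of player x at the catching threshold: against v_y = v_max − d₀/T
(which lies in Γ), v_max is a best reply of player x, achieved by exactly catching up
with player y, with payoff pλ·D/2 − c·T. -/
theorem best_reply_x_middle_branch
    (D p lam c T vmin vmax x0 y0 d0 d : ℝ)
    (hD : 0 < D) (hvmin : 0 < vmin) (hvv : vmin < vmax) (hT : 0 < T)
    (hshort : T * vmax < D / 2)
    (hp : 0 ≤ p) (hlam : 0 < lam) (hc : 0 ≤ c) (hplam : 0 < p * lam)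
    (hx0 : x0 ∈ Set.Ico 0 D) (hy0 : y0 ∈ Set.Ico 0 D)
    (hd0 : d0 = dirX D x0 y0) (hd : d = T * (vmax - vmin))
    (hd0pos : 0 < d0) (hd0d : d0 < d) (hdy : d < dirY D x0 y0) :
    vmax - d0 / T ∈ Set.Icc vmin vmax ∧
    (∀ w ∈ Set.Icc vmin vmax,
      uX D p lam c T x0 y0 w (vmax - d0 / T) ≤
        uX D p lam c T x0 y0 vmax (vmax - d0 / T)) ∧
    uX D p lam c T x0 y0 vmax (vmax - d0 / T) = p * lam * (D / 2) - c * T :=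
  best_reply_x_middle_branch_general D p lam c T vmin vmax x0 y0 d0 d hD hvmin hT hshort hplam hd0
    hd hd0pos hd0d
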